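/- Let ε > 0 and let P₀, P₁ be probability mass functions on a finite type R. Define δ₀ = Σ_{r ∈ R : P₀(r) > exp(ε)·P₁(r)} (P₀(r) − exp(ε)·P₁(r)) and δ₁ = Σ_{r ∈ R : P₁(r) > exp(ε)·P₀(r)} (P₁(r) − exp(ε)·P₀(r)). Then M̃_{(ε,δ₀,δ₁)}(0) and M̃_{(ε,δ₀,δ₁)}(1) are well-defined probability mass functions on {0,1,2,3} (all entries are nonnegative and sum to 1), and there exists a function T' : {0,1,2,3} → PMF(R) such that the bind of M̃_{(ε,δ₀,δ₁)}(b) with T' equals P_b, for both b = 0 and b = 1. -/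

import Mathlib

open Finset

/-- A probability mass function on a finite type: nonnegative and summing to 1. -/
def IsPMF {R : Type*} [Fintype R] (P : R → ℝ) : Prop :=
  (∀ r, 0 ≤ P r) ∧ ∑ r, P r = 1

/-- The generalized mechanism `M̃_{(ε,δ₀,δ₁)}(b)` on `{0,1,2,3}`, with
`α₀ = 1 − δ₀` and `α₁ = 1 − δ₁`. -/
noncomputable def Mgen (ε δ0 δ1 : ℝ) : Bool → Fin 4 → ℝ
  | false => ![δ0,
      (Real.exp (2 * ε) * (1 - δ0) - Real.exp ε * (1 - δ1)) / (Real.exp (2 * ε) - 1),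
      (Real.exp ε * (1 - δ1) - (1 - δ0)) / (Real.exp (2 * ε) - 1), 0]
  | true  => ![0,
      (Real.exp ε * (1 - δ0) - (1 - δ1)) / (Real.exp (2 * ε) - 1),
      (Real.exp (2 * ε) * (1 - δ1) - Real.exp ε * (1 - δ0)) / (Real.exp (2 * ε) - 1), δ1]

lemma key_nonneg (e a b : ℝ) (he : 1 ≤ e) (hb : 0 ≤ b) :
    0 ≤ e * (a - max (a - e * b) 0) - (b - max (b - e * a) 0) := by
  rcases le_total (a - e * b) 0 with h1 | h1 <;> rcases le_total (b - e * a) 0 with h2 | h2 <;>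
    simp only [max_eq_right, max_eq_left, h1, h2] <;>
    nlinarith [mul_nonneg (mul_nonneg (sub_nonneg.2 he) hb) (by linarith : (0:ℝ) ≤ e + 1)]

/-- Lemma 3.4 of Murtagh–Vadhan: with
`δ₀ = Σ_{r : P₀(r) > exp(ε)·P₁(r)} (P₀(r) − exp(ε)·P₁(r))`
(equivalently `Σ_r max(P₀(r) − exp(ε)·P₁(r), 0)`) and symmetrically `δ₁`,
the pair `M̃_{(ε,δ₀,δ₁)}(0), M̃_{(ε,δ₀,δ₁)}(1)` consists of genuine probability
mass functions, and `P₀, P₁` can be obtained from them by post-processing with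
a kernel `T' : {0,1,2,3} → PMF(R)`. -/
theorem simulation_gen (ε : ℝ) (hε : 0 < ε) {R : Type*} [Fintype R]
    (P0 P1 : R → ℝ) (hP0 : IsPMF P0) (hP1 : IsPMF P1)
    (δ0 δ1 : ℝ)
    (hδ0 : δ0 = ∑ r, max (P0 r - Real.exp ε * P1 r) 0)
    (hδ1 : δ1 = ∑ r, max (P1 r - Real.exp ε * P0 r) 0) :
    IsPMF (Mgen ε δ0 δ1 false) ∧ IsPMF (Mgen ε δ0 δ1 true) ∧
    ∃ T' : Fin 4 → R → ℝ,
      (∀ x, IsPMF (T' x)) ∧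
      (∀ r, ∑ x, Mgen ε δ0 δ1 false x * T' x r = P0 r) ∧
      (∀ r, ∑ x, Mgen ε δ0 δ1 true x * T' x r = P1 r) := by
  classical
  set e : ℝ := Real.exp ε with he_def
  have he1 : 1 < e := by
    have := Real.add_one_le_exp ε; simp only [he_def]; linarith
  have he0 : (0:ℝ) < e := by linarith
  have hE : Real.exp (2 * ε) = e * e := by rw [two_mul, Real.exp_add]
  have hE1 : (0:ℝ) < e * e - 1 := by nlinarith
  -- the clipped pieces
  set f0 : R → ℝ := fun r => max (P0 r - e * P1 r) 0 with hf0_def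
  set f1 : R → ℝ := fun r => max (P1 r - e * P0 r) 0 with hf1_def
  have hf0nn : ∀ r, 0 ≤ f0 r := fun r => le_max_right _ _
  have hf1nn : ∀ r, 0 ≤ f1 r := fun r => le_max_right _ _
  have hQ0nn : ∀ r, 0 ≤ P0 r - f0 r := by
    intro r
    have h1 : f0 r ≤ P0 r := by
      apply max_le _ (hP0.1 r)
      nlinarith [hP1.1 r]
    linarith
  have hQ1nn : ∀ r, 0 ≤ P1 r - f1 r := by
    intro r
    have h1 : f1 r ≤ P1 r := by
      apply max_le _ (hP1.1 r)
      nlinarith [hP0.1 r]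
    linarith
  have hk0 : ∀ r, 0 ≤ e * (P0 r - f0 r) - (P1 r - f1 r) := by
    intro r
    simpa [hf0_def, hf1_def] using key_nonneg e (P0 r) (P1 r) he1.le (hP1.1 r)
  have hk1 : ∀ r, 0 ≤ e * (P1 r - f1 r) - (P0 r - f0 r) := by
    intro r
    simpa [hf0_def, hf1_def] using key_nonneg e (P1 r) (P0 r) he1.le (hP0.1 r)
  have hsumf0 : ∑ r, f0 r = δ0 := hδ0.symm
  have hsumf1 : ∑ r, f1 r = δ1 := hδ1.symm
  have hsum0 : ∑ r, (P0 r - f0 r) = 1 - δ0 := by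
    rw [Finset.sum_sub_distrib, hP0.2, hsumf0]
  have hsum1 : ∑ r, (P1 r - f1 r) = 1 - δ1 := by
    rw [Finset.sum_sub_distrib, hP1.2, hsumf1]
  have hδ0nn : 0 ≤ δ0 := hδ0 ▸ Finset.sum_nonneg fun r _ => le_max_right _ _
  have hδ1nn : 0 ≤ δ1 := hδ1 ▸ Finset.sum_nonneg fun r _ => le_max_right _ _
  have hδ0le : δ0 ≤ 1 := by
    have := Finset.sum_nonneg fun r (_ : r ∈ Finset.univ) => hQ0nn r
    rw [hsum0] at this; linarith
  have hδ1le : δ1 ≤ 1 := by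
    have := Finset.sum_nonneg fun r (_ : r ∈ Finset.univ) => hQ1nn r
    rw [hsum1] at this; linarith
  have hssum : ∑ r, (e * (P0 r - f0 r) - (P1 r - f1 r)) = e * (1 - δ0) - (1 - δ1) := by
    rw [Finset.sum_sub_distrib, ← Finset.mul_sum, hsum0, hsum1]
  have htsum : ∑ r, (e * (P1 r - f1 r) - (P0 r - f0 r)) = e * (1 - δ1) - (1 - δ0) := by
    rw [Finset.sum_sub_distrib, ← Finset.mul_sum, hsum1, hsum0]
  have hsnn : 0 ≤ e * (1 - δ0) - (1 - δ1) := by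
    rw [← hssum]; exact Finset.sum_nonneg fun r _ => hk0 r
  have htnn : 0 ≤ e * (1 - δ1) - (1 - δ0) := by
    rw [← htsum]; exact Finset.sum_nonneg fun r _ => hk1 r
  have hs0 : e * (1 - δ0) - (1 - δ1) = 0 → ∀ r, e * (P0 r - f0 r) - (P1 r - f1 r) = 0 := by
    intro h r
    have := (Finset.sum_eq_zero_iff_of_nonneg fun r (_ : r ∈ Finset.univ) => hk0 r).1
      (by rw [hssum, h])
    exact this r (Finset.mem_univ r)
  have ht0 : e * (1 - δ1) - (1 - δ0) = 0 → ∀ r, e * (P1 r - f1 r) - (P0 r - f0 r) = 0 := by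
    intro h r
    have := (Finset.sum_eq_zero_iff_of_nonneg fun r (_ : r ∈ Finset.univ) => hk1 r).1
      (by rw [htsum, h])
    exact this r (Finset.mem_univ r)
  have hf0z : δ0 = 0 → ∀ r, f0 r = 0 := by
    intro h r
    have := (Finset.sum_eq_zero_iff_of_nonneg fun r (_ : r ∈ Finset.univ) => hf0nn r).1
      (by rw [hsumf0, h])
    exact this r (Finset.mem_univ r)
  have hf1z : δ1 = 0 → ∀ r, f1 r = 0 := by
    intro h r
    have := (Finset.sum_eq_zero_iff_of_nonneg fun r (_ : r ∈ Finset.univ) => hf1nn r).1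
      (by rw [hsumf1, h])
    exact this r (Finset.mem_univ r)
  refine ⟨⟨?_, ?_⟩, ⟨?_, ?_⟩, ?_⟩
  · intro x
    fin_cases x <;> simp [Mgen, hE]
    · exact hδ0nn
    · apply div_nonneg _ hE1.le
      nlinarith [mul_nonneg he0.le hsnn]
    · apply div_nonneg _ hE1.le
      linarith
  · rw [Fin.sum_univ_four]
    simp only [Mgen, hE, Matrix.cons_val_zero, Matrix.cons_val_one, Matrix.head_cons,
      Matrix.cons_val_two, Matrix.tail_cons, Matrix.cons_val_three]
    have hne : e ^ 2 - 1 ≠ 0 := by rw [sq]; exact hE1.ne'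
    field_simp
    ring
  · intro x
    fin_cases x <;> simp [Mgen, hE]
    · apply div_nonneg _ hE1.le
      linarith
    · apply div_nonneg _ hE1.le
      nlinarith [mul_nonneg he0.le htnn]
    · exact hδ1nn
  · rw [Fin.sum_univ_four]
    simp only [Mgen, hE, Matrix.cons_val_zero, Matrix.cons_val_one, Matrix.head_cons,
      Matrix.cons_val_two, Matrix.tail_cons, Matrix.cons_val_three]
    have hne : e ^ 2 - 1 ≠ 0 := by rw [sq]; exact hE1.ne'
    field_simp
    ring
  · refine ⟨![if δ0 = 0 then P0 else fun r => f0 r / δ0,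
      if e * (1 - δ0) - (1 - δ1) = 0 then P0
        else fun r => (e * (P0 r - f0 r) - (P1 r - f1 r)) / (e * (1 - δ0) - (1 - δ1)),
      if e * (1 - δ1) - (1 - δ0) = 0 then P0
        else fun r => (e * (P1 r - f1 r) - (P0 r - f0 r)) / (e * (1 - δ1) - (1 - δ0)),
      if δ1 = 0 then P1 else fun r => f1 r / δ1], ?_, ?_, ?_⟩
    · have hT0 : IsPMF (if δ0 = 0 then P0 else fun r => f0 r / δ0) := by
        split_ifs with h
        · exact hP0
        · refine ⟨fun r => div_nonneg (hf0nn r) hδ0nn, ?_⟩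
          rw [← Finset.sum_div, hsumf0, div_self h]
      have hT1 : IsPMF (if e * (1 - δ0) - (1 - δ1) = 0 then P0
          else fun r => (e * (P0 r - f0 r) - (P1 r - f1 r)) / (e * (1 - δ0) - (1 - δ1))) := by
        split_ifs with h
        · exact hP0
        · refine ⟨fun r => div_nonneg (hk0 r) hsnn, ?_⟩
          rw [← Finset.sum_div, hssum, div_self h]
      have hT2 : IsPMF (if e * (1 - δ1) - (1 - δ0) = 0 then P0
          else fun r => (e * (P1 r - f1 r) - (P0 r - f0 r)) / (e * (1 - δ1) - (1 - δ0))) := by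
        split_ifs with h
        · exact hP0
        · refine ⟨fun r => div_nonneg (hk1 r) htnn, ?_⟩
          rw [← Finset.sum_div, htsum, div_self h]
      have hT3 : IsPMF (if δ1 = 0 then P1 else fun r => f1 r / δ1) := by
        split_ifs with h
        · exact hP1
        · refine ⟨fun r => div_nonneg (hf1nn r) hδ1nn, ?_⟩
          rw [← Finset.sum_div, hsumf1, div_self h]
      intro x
      fin_cases x
      · exact hT0
      · exact hT1
      · exact hT2
      · exact hT3
    · intro r
      rw [Fin.sum_univ_four]
      simp only [Mgen, hE, Matrix.cons_val_zero, Matrix.cons_val_one, Matrix.head_cons,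
        Matrix.cons_val_two, Matrix.tail_cons, Matrix.cons_val_three]
      have t0 : δ0 * (if δ0 = 0 then P0 else fun r => f0 r / δ0) r = f0 r := by
        split_ifs with h
        · rw [h, hf0z h r, zero_mul]
        · field_simp
      have t1 : ((e * e * (1 - δ0) - e * (1 - δ1)) / (e * e - 1)) *
          (if e * (1 - δ0) - (1 - δ1) = 0 then P0
            else fun r => (e * (P0 r - f0 r) - (P1 r - f1 r)) / (e * (1 - δ0) - (1 - δ1))) r
          = e * (e * (P0 r - f0 r) - (P1 r - f1 r)) / (e * e - 1) := by
        split_ifs with h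
        · rw [hs0 h r]
          have : e * e * (1 - δ0) - e * (1 - δ1) = e * (e * (1 - δ0) - (1 - δ1)) := by ring
          rw [this, h]
          simp
        · field_simp
      have t2 : ((e * (1 - δ1) - (1 - δ0)) / (e * e - 1)) *
          (if e * (1 - δ1) - (1 - δ0) = 0 then P0
            else fun r => (e * (P1 r - f1 r) - (P0 r - f0 r)) / (e * (1 - δ1) - (1 - δ0))) r
          = (e * (P1 r - f1 r) - (P0 r - f0 r)) / (e * e - 1) := by
        split_ifs with h
        · rw [ht0 h r, h]
          simp
        · field_simp
      rw [t0, t1, t2]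
      have hq : e * (e * (P0 r - f0 r) - (P1 r - f1 r)) / (e * e - 1) +
          (e * (P1 r - f1 r) - (P0 r - f0 r)) / (e * e - 1) = P0 r - f0 r := by
        rw [← add_div, div_eq_iff hE1.ne']
        ring
      linarith [hq]
    · intro r
      rw [Fin.sum_univ_four]
      simp only [Mgen, hE, Matrix.cons_val_zero, Matrix.cons_val_one, Matrix.head_cons,
        Matrix.cons_val_two, Matrix.tail_cons, Matrix.cons_val_three]
      have t3 : δ1 * (if δ1 = 0 then P1 else fun r => f1 r / δ1) r = f1 r := by
        split_ifs with h
        · rw [h, hf1z h r, zero_mul]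
        · field_simp
      have t1 : ((e * (1 - δ0) - (1 - δ1)) / (e * e - 1)) *
          (if e * (1 - δ0) - (1 - δ1) = 0 then P0
            else fun r => (e * (P0 r - f0 r) - (P1 r - f1 r)) / (e * (1 - δ0) - (1 - δ1))) r
          = (e * (P0 r - f0 r) - (P1 r - f1 r)) / (e * e - 1) := by
        split_ifs with h
        · rw [hs0 h r, h]
          simp
        · field_simp
      have t2 : ((e * e * (1 - δ1) - e * (1 - δ0)) / (e * e - 1)) *
          (if e * (1 - δ1) - (1 - δ0) = 0 then P0
            else fun r => (e * (P1 r - f1 r) - (P0 r - f0 r)) / (e * (1 - δ1) - (1 - δ0))) r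
          = e * (e * (P1 r - f1 r) - (P0 r - f0 r)) / (e * e - 1) := by
        split_ifs with h
        · rw [ht0 h r]
          have : e * e * (1 - δ1) - e * (1 - δ0) = e * (e * (1 - δ1) - (1 - δ0)) := by ring
          rw [this, h]
          simp
        · field_simp
      rw [t1, t2, t3]
      have hq : (e * (P0 r - f0 r) - (P1 r - f1 r)) / (e * e - 1) +
          e * (e * (P1 r - f1 r) - (P0 r - f0 r)) / (e * e - 1) = P1 r - f1 r := by
        rw [← add_div, div_eq_iff hE1.ne']
        ring
      linarith [hq]
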